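/- (Foster's identity) For a connected graph G = (V,E), the sum over all edges e of the effective resistance between its endpoints equals |V| − 1: Σ_{e∈E} r(e⁺,e⁻) = |V| − 1. -/

import Mathlib

open scoped Classical
open Matrix

/-- A finite multigraph without loop edges, given by endpoint maps on an edge type. -/
structure Multigraph where
  V : Type
  E : Type
  [fintV : Fintype V]
  [fintE : Fintype E]
  fst : E → V
  snd : E → V
  no_loop : ∀ e, fst e ≠ snd e

namespace Multigraph

variable (G : Multigraph)

instance : Fintype G.V := G.fintV
instance : Fintype G.E := G.fintE

/-- One step along an edge of the subgraph with edge set `S`. -/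
def step (S : Finset G.E) (u v : G.V) : Prop :=
  ∃ e ∈ S, (G.fst e = u ∧ G.snd e = v) ∨ (G.fst e = v ∧ G.snd e = u)

/-- Two vertices are in the same component of the spanning subgraph with edge set `S`. -/
def reach (S : Finset G.E) : G.V → G.V → Prop :=
  Relation.EqvGen (G.step S)

/-- Number of connected components of the spanning subgraph with edge set `S`. -/
noncomputable def ncomp (S : Finset G.E) : ℕ :=
  Nat.card (Quotient (Relation.EqvGen.setoid (G.step S)))

/-- The graph is connected. -/
def IsConnected : Prop := G.ncomp Finset.univ = 1

/-- `S` is the edge set of a spanning tree. -/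
def IsSpanningTree (S : Finset G.E) : Prop :=
  G.ncomp S = 1 ∧ S.card + 1 = Fintype.card G.V

/-- `S` is the edge set of a two-component spanning forest. -/
def IsTwoForest (S : Finset G.E) : Prop :=
  G.ncomp S = 2 ∧ S.card + 2 = Fintype.card G.V

/-- `S` is the edge set of a three-component spanning forest. -/
def IsThreeForest (S : Finset G.E) : Prop :=
  G.ncomp S = 3 ∧ S.card + 3 = Fintype.card G.V

/-- κ(G): number of spanning trees. -/
noncomputable def kappa : ℕ := Nat.card {S : Finset G.E // G.IsSpanningTree S}

/-- κ₂(G): number of two-component spanning forests. -/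
noncomputable def kappa2 : ℕ := Nat.card {S : Finset G.E // G.IsTwoForest S}

/-- κ₂(x|y): number of two-forests with `x` and `y` in different components. -/
noncomputable def kappa2Sep (x y : G.V) : ℕ :=
  Nat.card {S : Finset G.E // G.IsTwoForest S ∧ ¬ G.reach S x y}

/-- κ₂(xy|q): number of two-forests with `x`, `y` in one component, `q` in the other. -/
noncomputable def kappa2Tog (x y q : G.V) : ℕ :=
  Nat.card {S : Finset G.E // G.IsTwoForest S ∧ G.reach S x y ∧ ¬ G.reach S x q}

/-- κ₃(x|y|q): number of three-forests with `x`, `y`, `q` in pairwise distinct components. -/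
noncomputable def kappa3Sep (x y q : G.V) : ℕ :=
  Nat.card {S : Finset G.E //
    G.IsThreeForest S ∧ ¬ G.reach S x y ∧ ¬ G.reach S x q ∧ ¬ G.reach S y q}

/-- Effective resistance: r(x,y) = κ₂(x|y)/κ(G). -/
noncomputable def res (x y : G.V) : ℝ := (G.kappa2Sep x y : ℝ) / (G.kappa : ℝ)

/-- Potential kernel: j_q(x,y) = κ₂(xy|q)/κ(G). -/
noncomputable def jfun (q x y : G.V) : ℝ := (G.kappa2Tog x y q : ℝ) / (G.kappa : ℝ)

/-- Cut size |∂F| of a two-forest with edge set `S`: edges joining the two components. -/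
noncomputable def cutSize (S : Finset G.E) : ℕ :=
  Nat.card {e : G.E // ¬ G.reach S (G.fst e) (G.snd e)}

/-- The curvature vector μ. -/
noncomputable def mu (x : G.V) : ℝ :=
  1 - (1/2) * ∑ e : G.E,
    (if G.fst e = x ∨ G.snd e = x then G.res (G.fst e) (G.snd e) else 0)

/-- The Laplacian matrix of `G`. -/
noncomputable def lap : Matrix G.V G.V ℝ := fun v w =>
  (if v = w then (Nat.card {e : G.E // G.fst e = v ∨ G.snd e = v} : ℝ) else 0)
    - (Nat.card {e : G.E // (G.fst e = v ∧ G.snd e = w) ∨ (G.fst e = w ∧ G.snd e = v)} : ℝ)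

/-- The effective resistance matrix of `G`. -/
noncomputable def resMatrix : Matrix G.V G.V ℝ := fun v w => G.res v w

end Multigraph

namespace Multigraph

variable (G : Multigraph)

lemma reach_refl (S : Finset G.E) (x : G.V) : G.reach S x x := Relation.EqvGen.refl x

lemma reach_symm {S : Finset G.E} {x y : G.V} (h : G.reach S x y) : G.reach S y x :=
  Relation.EqvGen.symm _ _ h

lemma reach_trans {S : Finset G.E} {x y z : G.V} (h : G.reach S x y) (h' : G.reach S y z) :
    G.reach S x z := Relation.EqvGen.trans _ _ _ h h'

lemma reach_mono {S T : Finset G.E} (hST : S ⊆ T) {x y : G.V} (h : G.reach S x y) :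
    G.reach T x y :=
  Relation.EqvGen.mono (r := G.step S) (p := G.step T)
    (by intro a b hab; obtain ⟨e, he, hor⟩ := hab; exact ⟨e, hST he, hor⟩) x y h

lemma reach_of_mem {S : Finset G.E} {e : G.E} (he : e ∈ S) :
    G.reach S (G.fst e) (G.snd e) :=
  Relation.EqvGen.rel _ _ ⟨e, he, Or.inl ⟨rfl, rfl⟩⟩

lemma reach_insert_iff (S : Finset G.E) (e : G.E) (x y : G.V) :
    G.reach (insert e S) x y ↔ G.reach S x y ∨
      (G.reach S x (G.fst e) ∧ G.reach S (G.snd e) y) ∨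
      (G.reach S x (G.snd e) ∧ G.reach S (G.fst e) y) := by
  constructor
  · intro h
    induction h with
    | rel u v huv =>
      obtain ⟨f, hf, hor⟩ := huv
      rcases Finset.mem_insert.mp hf with rfl | hfS
      · rcases hor with ⟨h1, h2⟩ | ⟨h1, h2⟩
        · subst h1; subst h2
          exact Or.inr (Or.inl ⟨G.reach_refl _ _, G.reach_refl _ _⟩)
        · subst h1; subst h2
          exact Or.inr (Or.inr ⟨G.reach_refl _ _, G.reach_refl _ _⟩)
      · exact Or.inl (Relation.EqvGen.rel _ _ ⟨f, hfS, hor⟩)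
    | refl u => exact Or.inl (G.reach_refl _ _)
    | symm u v _ ih =>
      rcases ih with h | ⟨h1, h2⟩ | ⟨h1, h2⟩
      · exact Or.inl (G.reach_symm h)
      · exact Or.inr (Or.inr ⟨G.reach_symm h2, G.reach_symm h1⟩)
      · exact Or.inr (Or.inl ⟨G.reach_symm h2, G.reach_symm h1⟩)
    | trans u v w _ _ ih1 ih2 =>
      rcases ih1 with h | ⟨h1, h2⟩ | ⟨h1, h2⟩ <;>
        rcases ih2 with h' | ⟨h1', h2'⟩ | ⟨h1', h2'⟩
      · exact Or.inl (G.reach_trans h h')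
      · exact Or.inr (Or.inl ⟨G.reach_trans h h1', h2'⟩)
      · exact Or.inr (Or.inr ⟨G.reach_trans h h1', h2'⟩)
      · exact Or.inr (Or.inl ⟨h1, G.reach_trans h2 h'⟩)
      · exact Or.inl (G.reach_trans h1 (G.reach_trans (G.reach_symm (G.reach_trans h2 h1')) h2'))
      · exact Or.inl (G.reach_trans h1 h2')
      · exact Or.inr (Or.inr ⟨h1, G.reach_trans h2 h'⟩)
      · exact Or.inl (G.reach_trans h1 h2')
      · exact Or.inl (G.reach_trans h1 (G.reach_trans (G.reach_symm (G.reach_trans h2 h1')) h2'))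
  · intro h
    have hedge : G.reach (insert e S) (G.fst e) (G.snd e) :=
      G.reach_of_mem (Finset.mem_insert_self e S)
    have hmono : ∀ {u v : G.V}, G.reach S u v → G.reach (insert e S) u v :=
      fun h => G.reach_mono (Finset.subset_insert e S) h
    rcases h with h | ⟨h1, h2⟩ | ⟨h1, h2⟩
    · exact hmono h
    · exact G.reach_trans (hmono h1) (G.reach_trans hedge (hmono h2))
    · exact G.reach_trans (hmono h1) (G.reach_trans (G.reach_symm hedge) (hmono h2))

/-- The natural map on component quotients induced by inserting an edge. -/
noncomputable def toInsert (S : Finset G.E) (e : G.E) :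
    Quotient (Relation.EqvGen.setoid (G.step S)) →
      Quotient (Relation.EqvGen.setoid (G.step (insert e S))) :=
  Quotient.map id (fun _ _ hab => G.reach_mono (Finset.subset_insert e S) hab)

lemma toInsert_mk (S : Finset G.E) (e : G.E) (x : G.V) :
    G.toInsert S e (Quotient.mk _ x) = Quotient.mk _ x := rfl

lemma toInsert_surjective (S : Finset G.E) (e : G.E) :
    Function.Surjective (G.toInsert S e) := by
  intro q
  induction q using Quotient.inductionOn with
  | h x => exact ⟨Quotient.mk _ x, rfl⟩

lemma ncomp_insert_of_reach {S : Finset G.E} {e : G.E}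
    (h : G.reach S (G.fst e) (G.snd e)) : G.ncomp (insert e S) = G.ncomp S := by
  refine (Nat.card_eq_of_bijective (G.toInsert S e) ⟨?_, G.toInsert_surjective S e⟩).symm
  intro q1 q2
  induction q1 using Quotient.inductionOn with
  | h x =>
    induction q2 using Quotient.inductionOn with
    | h y =>
      intro hq
      rw [G.toInsert_mk, G.toInsert_mk] at hq
      have hxy : G.reach (insert e S) x y := Quotient.exact hq
      rw [G.reach_insert_iff] at hxy
      refine Quotient.sound ?_
      rcases hxy with hxy | ⟨h1, h2⟩ | ⟨h1, h2⟩
      · exact hxy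
      · exact G.reach_trans h1 (G.reach_trans h h2)
      · exact G.reach_trans h1 (G.reach_trans (G.reach_symm h) h2)

lemma ncomp_insert_of_not_reach {S : Finset G.E} {e : G.E}
    (h : ¬ G.reach S (G.fst e) (G.snd e)) : G.ncomp (insert e S) + 1 = G.ncomp S := by
  classical
  set sQ := Relation.EqvGen.setoid (G.step S) with hsQ
  have hNe : (Quotient.mk sQ (G.fst e)) ≠ (Quotient.mk sQ (G.snd e)) := by
    intro hEq
    exact h (Quotient.exact hEq)
  -- the restriction of `toInsert` to classes other than that of `snd e` is a bijection
  have hcard : Nat.card {q : Quotient sQ // q ≠ Quotient.mk sQ (G.snd e)} =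
      G.ncomp (insert e S) := by
    refine Nat.card_eq_of_bijective (fun q => G.toInsert S e q.1) ⟨?_, ?_⟩
    · rintro ⟨q1, hq1⟩ ⟨q2, hq2⟩ hq
      induction q1 using Quotient.inductionOn with
      | h x =>
        induction q2 using Quotient.inductionOn with
        | h y =>
          simp only [G.toInsert_mk] at hq
          have hxy : G.reach (insert e S) x y := Quotient.exact hq
          rw [G.reach_insert_iff] at hxy
          refine Subtype.ext (Quotient.sound ?_)
          rcases hxy with hxy | ⟨h1, h2⟩ | ⟨h1, h2⟩
          · exact hxy
          · exact absurd (Quotient.sound (G.reach_symm h2) : _ = Quotient.mk sQ (G.snd e)) hq2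
          · exact absurd (Quotient.sound h1 : _ = Quotient.mk sQ (G.snd e)) hq1
    · intro q'
      induction q' using Quotient.inductionOn with
      | h x =>
        by_cases hx : G.reach S x (G.snd e)
        · refine ⟨⟨Quotient.mk sQ (G.fst e), hNe⟩, ?_⟩
          show G.toInsert S e (Quotient.mk sQ (G.fst e)) = _
          rw [G.toInsert_mk]
          refine Quotient.sound ?_
          refine G.reach_trans (G.reach_of_mem (Finset.mem_insert_self e S)) ?_
          exact G.reach_mono (Finset.subset_insert e S) (G.reach_symm hx)
        · refine ⟨⟨Quotient.mk sQ x, ?_⟩, rfl⟩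
          intro hEq
          exact hx (Quotient.exact hEq)
  haveI : Finite (Quotient sQ) := Quotient.finite sQ
  haveI : Fintype (Quotient sQ) := Fintype.ofFinite _
  have h1 : Nat.card {q : Quotient sQ // q ≠ Quotient.mk sQ (G.snd e)} =
      Fintype.card (Quotient sQ) - 1 := by
    rw [Nat.card_eq_fintype_card]
    have := Fintype.card_subtype_compl (fun q : Quotient sQ => q = Quotient.mk sQ (G.snd e))
    rw [Fintype.card_subtype_eq] at this
    exact this
  have hpos : 0 < Fintype.card (Quotient sQ) :=
    Fintype.card_pos_iff.mpr ⟨Quotient.mk sQ (G.snd e)⟩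
  have h2 : G.ncomp S = Fintype.card (Quotient sQ) := Nat.card_eq_fintype_card
  omega

lemma ncomp_le_insert_add_one (S : Finset G.E) (e : G.E) :
    G.ncomp S ≤ G.ncomp (insert e S) + 1 := by
  by_cases h : G.reach S (G.fst e) (G.snd e)
  · rw [G.ncomp_insert_of_reach h]; omega
  · rw [G.ncomp_insert_of_not_reach h]

lemma ncomp_empty : G.ncomp (∅ : Finset G.E) = Fintype.card G.V := by
  have hforward : ∀ {x y : G.V}, G.reach ∅ x y → x = y := by
    intro x y h
    induction h with
    | rel u v huv => obtain ⟨f, hf, _⟩ := huv; exact absurd hf (Finset.notMem_empty f)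
    | refl u => rfl
    | symm u v _ ih => exact ih.symm
    | trans u v w _ _ ih1 ih2 => exact ih1.trans ih2
  rw [ncomp, ← Nat.card_eq_fintype_card]
  refine (Nat.card_eq_of_bijective (Quotient.mk _) ⟨?_, ?_⟩).symm
  · intro x y h
    exact hforward (Quotient.exact h)
  · intro q
    induction q using Quotient.inductionOn with
    | h x => exact ⟨x, rfl⟩

lemma card_le_ncomp_add_card (S : Finset G.E) :
    Fintype.card G.V ≤ G.ncomp S + S.card := by
  classical
  induction S using Finset.induction_on with
  | empty => simp [G.ncomp_empty]
  | @insert e S he ih =>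
    have h1 := G.ncomp_le_insert_add_one S e
    rw [Finset.card_insert_of_notMem he]
    omega

lemma ncomp_add_card_of_indep (S : Finset G.E)
    (hind : ∀ e ∈ S, ¬ G.reach (S.erase e) (G.fst e) (G.snd e)) :
    G.ncomp S + S.card = Fintype.card G.V := by
  classical
  induction S using Finset.induction_on with
  | empty => simp [G.ncomp_empty]
  | @insert e S he ih =>
    have herase : (insert e S).erase e = S := Finset.erase_insert he
    have hne : ¬ G.reach S (G.fst e) (G.snd e) := by
      have := hind e (Finset.mem_insert_self e S)
      rwa [herase] at this
    have hkey := G.ncomp_insert_of_not_reach hne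
    have hIH : G.ncomp S + S.card = Fintype.card G.V := by
      refine ih (fun f hf => ?_)
      have hsub : S.erase f ⊆ (insert e S).erase f :=
        Finset.erase_subset_erase f (Finset.subset_insert e S)
      exact fun hr => hind f (Finset.mem_insert_of_mem hf) (G.reach_mono hsub hr)
    rw [Finset.card_insert_of_notMem he]
    omega

lemma exists_forest : ∀ (n : ℕ) (S : Finset G.E), S.card ≤ n →
    ∃ T : Finset G.E, G.ncomp T = G.ncomp S ∧ G.ncomp T + T.card = Fintype.card G.V := by
  intro n
  induction n with
  | zero =>
    intro S hS
    have hS0 : S = ∅ := Finset.card_eq_zero.mp (Nat.le_zero.mp hS)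
    subst hS0
    exact ⟨∅, rfl, G.ncomp_add_card_of_indep ∅ (by simp)⟩
  | succ n ih =>
    intro S hS
    by_cases hall : ∀ e ∈ S, ¬ G.reach (S.erase e) (G.fst e) (G.snd e)
    · exact ⟨S, rfl, G.ncomp_add_card_of_indep S hall⟩
    · push_neg at hall
      obtain ⟨e, he, hre⟩ := hall
      have hins : insert e (S.erase e) = S := Finset.insert_erase he
      have heq : G.ncomp (S.erase e) = G.ncomp S := by
        have h' := G.ncomp_insert_of_reach hre
        rw [hins] at h'
        exact h'.symm
      have hcard : (S.erase e).card ≤ n := by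
        have := Finset.card_erase_of_mem he
        have hpos : 0 < S.card := Finset.card_pos.mpr ⟨e, he⟩
        omega
      obtain ⟨T, hT1, hT2⟩ := ih (S.erase e) hcard
      exact ⟨T, hT1.trans heq, hT2⟩

lemma exists_spanning_tree (hG : G.IsConnected) :
    ∃ T : Finset G.E, G.IsSpanningTree T := by
  obtain ⟨T, hT1, hT2⟩ := G.exists_forest Finset.univ.card Finset.univ le_rfl
  rw [hG] at hT1
  exact ⟨T, hT1, by omega⟩

lemma insert_tree {S : Finset G.E} {e : G.E} (hS : G.IsTwoForest S)
    (h : ¬ G.reach S (G.fst e) (G.snd e)) :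
    G.IsSpanningTree (insert e S) ∧ e ∉ S := by
  have heS : e ∉ S := fun heS => h (G.reach_of_mem heS)
  have h2 := G.ncomp_insert_of_not_reach h
  obtain ⟨hn, hc⟩ := hS
  refine ⟨⟨by omega, ?_⟩, heS⟩
  rw [Finset.card_insert_of_notMem heS]
  omega

lemma erase_forest {T : Finset G.E} {f : G.E} (hT : G.IsSpanningTree T) (hf : f ∈ T) :
    G.IsTwoForest (T.erase f) ∧ ¬ G.reach (T.erase f) (G.fst f) (G.snd f) := by
  obtain ⟨hn, hc⟩ := hT
  have hins : insert f (T.erase f) = T := Finset.insert_erase hf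
  have hcard : (T.erase f).card = T.card - 1 := Finset.card_erase_of_mem hf
  have hTpos : 0 < T.card := Finset.card_pos.mpr ⟨f, hf⟩
  have hnr : ¬ G.reach (T.erase f) (G.fst f) (G.snd f) := by
    intro hr
    have heq := G.ncomp_insert_of_reach hr
    rw [hins] at heq
    have hb := G.card_le_ncomp_add_card (T.erase f)
    omega
  have h2 := G.ncomp_insert_of_not_reach hnr
  rw [hins] at h2
  exact ⟨⟨by omega, by omega⟩, hnr⟩

/-- The Foster bijection between (two-forest separating `e`'s endpoints) and
(spanning tree containing `e`). -/
noncomputable def sepEquiv (e : G.E) :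
    {S : Finset G.E // G.IsTwoForest S ∧ ¬ G.reach S (G.fst e) (G.snd e)} ≃
      {T : Finset G.E // G.IsSpanningTree T ∧ e ∈ T} where
  toFun S := ⟨insert e S.1, (G.insert_tree S.2.1 S.2.2).1, Finset.mem_insert_self e S.1⟩
  invFun T := ⟨T.1.erase e, (G.erase_forest T.2.1 T.2.2).1, (G.erase_forest T.2.1 T.2.2).2⟩
  left_inv S := Subtype.ext (Finset.erase_insert (G.insert_tree S.2.1 S.2.2).2)
  right_inv T := Subtype.ext (Finset.insert_erase T.2.2)

lemma foster_count :
    ∑ e : G.E, G.kappa2Sep (G.fst e) (G.snd e) + G.kappa =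
      Fintype.card G.V * G.kappa := by
  classical
  have hstep : ∀ e : G.E, G.kappa2Sep (G.fst e) (G.snd e) =
      Nat.card {T : Finset G.E // G.IsSpanningTree T ∧ e ∈ T} :=
    fun e => Nat.card_congr (G.sepEquiv e)
  have hsub : ∀ e : G.E,
      Nat.card {T : Finset G.E // G.IsSpanningTree T ∧ e ∈ T} =
        (Finset.univ.filter (fun T : Finset G.E => G.IsSpanningTree T ∧ e ∈ T)).card := by
    intro e
    rw [Nat.card_eq_fintype_card, Fintype.card_subtype]
  have hκ : G.kappa = (Finset.univ.filter (fun T : Finset G.E => G.IsSpanningTree T)).card := by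
    rw [kappa, Nat.card_eq_fintype_card, Fintype.card_subtype]
  calc ∑ e : G.E, G.kappa2Sep (G.fst e) (G.snd e) + G.kappa
      = ∑ e : G.E, ∑ T : Finset G.E, (if G.IsSpanningTree T ∧ e ∈ T then 1 else 0)
        + ∑ T : Finset G.E, (if G.IsSpanningTree T then 1 else 0) := by
        rw [hκ, Finset.card_filter]
        congr 1
        refine Finset.sum_congr rfl (fun e _ => ?_)
        rw [hstep e, hsub e, Finset.card_filter]
    _ = ∑ T : Finset G.E, ((if G.IsSpanningTree T then T.card else 0)
        + (if G.IsSpanningTree T then 1 else 0)) := by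
        rw [Finset.sum_comm, ← Finset.sum_add_distrib]
        refine Finset.sum_congr rfl (fun T _ => ?_)
        congr 1
        by_cases hT : G.IsSpanningTree T
        · simp only [hT, true_and, if_true]
          rw [Finset.sum_ite_mem, Finset.univ_inter, Finset.sum_const, smul_eq_mul, mul_one]
        · simp [hT]
    _ = ∑ T : Finset G.E, (if G.IsSpanningTree T then Fintype.card G.V else 0) := by
        refine Finset.sum_congr rfl (fun T _ => ?_)
        by_cases hT : G.IsSpanningTree T
        · simp only [hT, if_true]
          exact hT.2
        · simp [hT]
    _ = Fintype.card G.V * G.kappa := by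
        rw [hκ, Finset.card_filter, Finset.mul_sum]
        refine Finset.sum_congr rfl (fun T _ => ?_)
        by_cases hT : G.IsSpanningTree T <;> simp [hT]

end Multigraph

theorem foster_identity (G : Multigraph) (hG : G.IsConnected) :
    ∑ e : G.E, G.res (G.fst e) (G.snd e) = (Fintype.card G.V : ℝ) - 1 := by
  classical
  obtain ⟨T, hT⟩ := G.exists_spanning_tree hG
  have hκpos : 0 < G.kappa := by
    haveI : Nonempty {S : Finset G.E // G.IsSpanningTree S} := ⟨⟨T, hT⟩⟩
    exact Nat.card_pos
  have hκne : (G.kappa : ℝ) ≠ 0 := Nat.cast_ne_zero.mpr hκpos.ne'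
  have hcount := G.foster_count
  have hcast : (∑ e : G.E, (G.kappa2Sep (G.fst e) (G.snd e) : ℝ)) + G.kappa
      = (Fintype.card G.V : ℝ) * G.kappa := by
    exact_mod_cast congrArg (Nat.cast : ℕ → ℝ) hcount
  simp only [Multigraph.res]
  rw [← Finset.sum_div]
  field_simp
  linarith [hcast]
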